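/- Let n ≥ 3 be odd. The spectrum of the conjugacy supercommuting graph of the dihedral group D_{2n} consists of the eigenvalue -1 with multiplicity 2n-3 together with the three roots of x³ + (3-2n)x² + (n²-5n+3)x + 2n² - 4n + 1 = 0. -/

import Mathlib

open Matrix Polynomial
open scoped Classical

/-- Adjacency matrix (over `ℂ`) of the conjugacy supercommuting graph of a group `G`:
distinct vertices `g, h` are adjacent iff they are conjugate, or some element conjugate
to `g` and some element conjugate to `h` are adjacent in the commuting graph of `G`
(i.e. they are distinct and commute). -/
noncomputable def cscomAdj (G : Type*) [Group G] : Matrix G G ℂ :=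
  Matrix.of fun g h =>
    if g ≠ h ∧ (IsConj g h ∨
        ∃ x y : G, IsConj g x ∧ IsConj h y ∧ x ≠ y ∧ Commute x y) then 1 else 0

namespace CSComAux

open DihedralGroup

variable {n : ℕ}

lemma eval_charpoly' {ι : Type*} [Fintype ι] [DecidableEq ι] (M : Matrix ι ι ℂ) (x : ℂ) :
    M.charpoly.eval x = (x • (1 : Matrix ι ι ℂ) - M).det := by
  rw [Matrix.charpoly, ← Polynomial.coe_evalRingHom, RingHom.map_det]
  congr 1
  ext i j
  by_cases h : i = j <;>
    simp [Matrix.charmatrix_apply, Matrix.map_apply, Matrix.one_apply, h,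
      Matrix.diagonal_apply, Matrix.sub_apply, Matrix.smul_apply]

lemma two_mul_eq_zero (hodd : Odd n) {i : ZMod n} (h : 2 * i = 0) : i = 0 := by
  obtain ⟨m, rfl⟩ := hodd
  have h2 : (2 : ZMod (2*m+1)) * ((m : ZMod (2*m+1)) + 1) = 1 := by
    have : ((2 * (m + 1) : ℕ) : ZMod (2*m+1)) = ((2*m+1 : ℕ) : ZMod (2*m+1)) + 1 := by
      push_cast; ring
    rw [ZMod.natCast_self, zero_add] at this
    push_cast at this
    linear_combination this
  linear_combination ((m : ZMod (2*m+1)) + 1) * h - i * h2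

lemma isConj_r_cases {i : ZMod n} {x : DihedralGroup n} (h : IsConj (r i) x) :
    x = r i ∨ x = r (-i) := by
  obtain ⟨c, hc⟩ := isConj_iff.mp h
  have hc' : c * r i = x * c := by rw [← hc]; group
  rcases c with k | k <;> rcases x with m | m <;>
    simp only [r_mul_r, r_mul_sr, sr_mul_r, sr_mul_sr, r.injEq, sr.injEq, reduceCtorEq] at hc'
  · left; rw [r.injEq]; linear_combination -hc'
  · right; rw [r.injEq]; linear_combination hc'

lemma isConj_sr_cases {j : ZMod n} {x : DihedralGroup n} (h : IsConj (sr j) x) :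
    ∃ m, x = sr m := by
  obtain ⟨c, hc⟩ := isConj_iff.mp h
  have hc' : c * sr j = x * c := by rw [← hc]; group
  rcases c with k | k <;> rcases x with m | m <;>
    simp only [r_mul_r, r_mul_sr, sr_mul_r, sr_mul_sr, r.injEq, sr.injEq, reduceCtorEq] at hc' <;>
    exact ⟨m, rfl⟩

lemma inv_r (k : ZMod n) : (r k)⁻¹ = r (-k) := by
  apply inv_eq_of_mul_eq_one_right
  rw [r_mul_r, add_neg_cancel]; rfl

lemma isConj_sr_sr (hodd : Odd n) (i j : ZMod n) : IsConj (sr i) (sr j) := by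
  obtain ⟨m, rfl⟩ := hodd
  refine isConj_iff.mpr ⟨r ((i - j) * ((m+1 : ℕ) : ZMod (2*m+1))), ?_⟩
  rw [inv_r, r_mul_sr, sr_mul_r, sr.injEq]
  have h2 : (2 : ZMod (2*m+1)) * ((m : ZMod (2*m+1)) + 1) = 1 := by
    have : ((2 * (m + 1) : ℕ) : ZMod (2*m+1)) = ((2*m+1 : ℕ) : ZMod (2*m+1)) + 1 := by
      push_cast; ring
    rw [ZMod.natCast_self, zero_add] at this
    push_cast at this
    linear_combination this
  push_cast
  linear_combination (j - i) * h2

lemma not_commute_r_sr (hodd : Odd n) {i : ZMod n} (hi : i ≠ 0) (k : ZMod n) :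
    ¬ Commute (r i) (sr k) := by
  intro h
  have hh := h.eq
  rw [r_mul_sr, sr_mul_r, sr.injEq] at hh
  exact hi (two_mul_eq_zero hodd (by linear_combination -hh))

lemma adj_rr (i j : ZMod n) :
    cscomAdj (DihedralGroup n) (r i) (r j) = if i = j then 0 else 1 := by
  rcases eq_or_ne i j with h | h
  · simp [cscomAdj, h]
  · have hne : (r i : DihedralGroup n) ≠ r j := by simp [r.injEq, h]
    rw [cscomAdj, of_apply, if_pos ⟨hne, Or.inr ⟨r i, r j, IsConj.refl _, IsConj.refl _, hne,
      by rw [Commute, SemiconjBy, r_mul_r, r_mul_r, add_comm]⟩⟩, if_neg h]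

lemma adj_rs (hodd : Odd n) (i j : ZMod n) :
    cscomAdj (DihedralGroup n) (r i) (sr j) = if i = 0 then 1 else 0 := by
  rcases eq_or_ne i 0 with h | h
  · subst h
    rw [cscomAdj, of_apply, if_pos, if_pos rfl]
    refine ⟨(by intro h; cases h), Or.inr ⟨r 0, sr j, IsConj.refl _, IsConj.refl _, (by intro h; cases h), ?_⟩⟩
    rw [Commute, SemiconjBy, r_mul_sr, sr_mul_r, sub_zero, add_zero]
  · rw [cscomAdj, of_apply, if_neg, if_neg h]
    rintro ⟨-, hconj | ⟨x, y, hx, hy, hxy, hcomm⟩⟩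
    · rcases isConj_r_cases hconj with h' | h' <;> simp at h'
    · obtain ⟨m, rfl⟩ := isConj_sr_cases hy
      rcases isConj_r_cases hx with rfl | rfl
      · exact not_commute_r_sr hodd h m hcomm
      · exact not_commute_r_sr hodd (neg_ne_zero.mpr h) m hcomm

lemma adj_sr (hodd : Odd n) (i j : ZMod n) :
    cscomAdj (DihedralGroup n) (sr i) (r j) = if j = 0 then 1 else 0 := by
  rcases eq_or_ne j 0 with h | h
  · subst h
    rw [cscomAdj, of_apply, if_pos, if_pos rfl]
    refine ⟨(by intro h; cases h), Or.inr ⟨sr i, r 0, IsConj.refl _, IsConj.refl _, (by intro h; cases h), ?_⟩⟩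
    rw [Commute, SemiconjBy, sr_mul_r, r_mul_sr, sub_zero, add_zero]
  · rw [cscomAdj, of_apply, if_neg, if_neg h]
    rintro ⟨-, hconj | ⟨x, y, hx, hy, hxy, hcomm⟩⟩
    · obtain ⟨m, hm⟩ := isConj_sr_cases hconj; simp at hm
    · obtain ⟨m, rfl⟩ := isConj_sr_cases hx
      rcases isConj_r_cases hy with rfl | rfl
      · exact not_commute_r_sr hodd h m hcomm.symm
      · exact not_commute_r_sr hodd (neg_ne_zero.mpr h) m hcomm.symm

lemma adj_ss (hodd : Odd n) (i j : ZMod n) :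
    cscomAdj (DihedralGroup n) (sr i) (sr j) = if i = j then 0 else 1 := by
  rcases eq_or_ne i j with h | h
  · simp [cscomAdj, h]
  · rw [cscomAdj, of_apply, if_pos, if_neg h]
    exact ⟨by simp [sr.injEq, h], Or.inl (isConj_sr_sr hodd i j)⟩

noncomputable def ue (n : ℕ) : DihedralGroup n → Fin 3 → ℂ := fun g =>
  match g with
  | .r i => ![if i = 0 then 1 else 0, if i = 0 then 0 else 1, 0]
  | .sr _ => ![0, 0, 1]

noncomputable def ve (n : ℕ) : DihedralGroup n → Fin 3 → ℂ := fun g =>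
  match g with
  | .r i => ![1, 1, if i = 0 then 1 else 0]
  | .sr _ => ![1, 0, 1]

lemma key1 (hodd : Odd n) :
    cscomAdj (DihedralGroup n) + 1 = Matrix.of (ue n) * (Matrix.of (ve n))ᵀ := by
  ext g h
  rw [Matrix.mul_apply, Fin.sum_univ_three]
  rcases g with i | i <;> rcases h with j | j <;>
    simp only [Matrix.add_apply, Matrix.one_apply, of_apply, transpose_apply,
      adj_rr, adj_rs hodd, adj_sr hodd, adj_ss hodd, ue, ve, r.injEq, sr.injEq,
      reduceCtorEq, Matrix.cons_val_zero, Matrix.cons_val_one, Matrix.head_cons,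
      Matrix.cons_val_two, Matrix.tail_cons] <;>
    rcases eq_or_ne i 0 with hi | hi <;>
    rcases eq_or_ne j 0 with hj | hj <;>
    rcases eq_or_ne i j with hij | hij <;>
    simp_all

def dEquiv (n : ℕ) : (ZMod n) ⊕ (ZMod n) ≃ DihedralGroup n where
  toFun i := match i with
    | Sum.inl j => r j
    | Sum.inr j => sr j
  invFun i := match i with
    | r j => Sum.inl j
    | sr j => Sum.inr j
  left_inv := by rintro (x | x) <;> rfl
  right_inv := by rintro (x | x) <;> rfl

lemma dsum [NeZero n] (f : DihedralGroup n → ℂ) :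
    ∑ g, f g = (∑ i : ZMod n, f (r i)) + ∑ i : ZMod n, f (sr i) := by
  rw [← Equiv.sum_comp (dEquiv n) f, Fintype.sum_sum_type]
  rfl

lemma s2 [NeZero n] : ∑ i : ZMod n, (if i = 0 then (1:ℂ) else 0) = 1 := by
  simp

lemma s3 [NeZero n] : ∑ i : ZMod n, (if i = 0 then (0:ℂ) else 1) = (n : ℂ) - 1 := by
  have : ∀ i : ZMod n, (if i = 0 then (0:ℂ) else 1) = 1 - (if i = 0 then 1 else 0) := by
    intro i; split <;> ring
  simp only [this, Finset.sum_sub_distrib, Finset.sum_const, Finset.card_univ, ZMod.card]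
  simp

lemma key2 [NeZero n] :
    (Matrix.of (ve n))ᵀ * Matrix.of (ue n) =
      !![1, (n:ℂ)-1, (n:ℂ); 1, (n:ℂ)-1, 0; 1, 0, (n:ℂ)] := by
  ext k l
  rw [Matrix.mul_apply]
  fin_cases k <;> fin_cases l <;>
    · rw [dsum]
      simp only [transpose_apply, of_apply, ue, ve, Matrix.cons_val_zero,
        Matrix.cons_val_one, Matrix.head_cons, Matrix.cons_val_two, Matrix.tail_cons,
        mul_one, one_mul, mul_zero, zero_mul, mul_ite, ite_mul]
      simp [s2, s3, Finset.sum_const, ZMod.card, Finset.card_univ, mul_comm,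
        Matrix.vecHead, Matrix.vecTail]

lemma key3 [NeZero n] (hn : 3 ≤ n) (hodd : Odd n) {x : ℂ} (hx : x + 1 ≠ 0) :
    (cscomAdj (DihedralGroup n)).charpoly.eval x =
      (x + 1) ^ (2 * n - 3) *
        (x ^ 3 + (3 - 2 * (n : ℂ)) * x ^ 2 + ((n : ℂ) ^ 2 - 5 * (n : ℂ) + 3) * x
          + (2 * (n : ℂ) ^ 2 - 4 * (n : ℂ) + 1)) := by
  set M := cscomAdj (DihedralGroup n)
  set U := Matrix.of (ue n)
  set V := Matrix.of (ve n)
  set c : ℂ := (x + 1)⁻¹ with hc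
  have hM : M = U * Vᵀ - 1 := by rw [← key1 hodd]; exact (add_sub_cancel_right M 1).symm
  have hneg : (x + 1) * (-c) = -1 := by
    rw [hc, mul_neg, mul_inv_cancel₀ hx]
  have h1 : x • (1 : Matrix (DihedralGroup n) (DihedralGroup n) ℂ) - M
      = (x + 1) • (1 + ((-c) • U) * Vᵀ) := by
    rw [hM, Matrix.smul_mul, smul_add, smul_smul, hneg, neg_one_smul, add_smul, one_smul]
    abel
  have h2 : ((x • (1 : Matrix (DihedralGroup n) (DihedralGroup n) ℂ) - M)).det
      = (x + 1) ^ (2 * n) * (1 + Vᵀ * ((-c) • U)).det := by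
    rw [h1, Matrix.det_smul, DihedralGroup.card, Matrix.det_one_add_mul_comm]
  have hE : (1 + Vᵀ * ((-c) • U))
      = !![1-c, -(c*((n:ℂ)-1)), -(c*(n:ℂ)); -c, 1-c*((n:ℂ)-1), 0; -c, 0, 1-c*(n:ℂ)] := by
    rw [Matrix.mul_smul, key2]
    ext k l
    fin_cases k <;> fin_cases l <;>
      simp [Matrix.one_apply, Matrix.vecHead, Matrix.vecTail] <;> ring
  have h3 : (1 + Vᵀ * ((-c) • U)).det
      = (1-c) * ((1-c*((n:ℂ)-1)) * (1-c*(n:ℂ)))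
        - (-(c*((n:ℂ)-1))) * ((-c) * (1-c*(n:ℂ)))
        + (-(c*(n:ℂ))) * ((-c) * 0 - (1-c*((n:ℂ)-1)) * (-c)) := by
    rw [hE, Matrix.det_fin_three]
    simp [Matrix.vecHead, Matrix.vecTail]
    ring
  rw [eval_charpoly', h2, h3]
  have hsplit : 2 * n = (2 * n - 3) + 3 := by omega
  rw [hsplit, pow_add, mul_assoc]
  congr 1
  have hx' : (1:ℂ) + x ≠ 0 := by rwa [add_comm]
  rw [hc]
  field_simp
  ring

end CSComAux

open CSComAux in
/-- For odd `n ≥ 3`, the spectrum of the conjugacy supercommuting graph of the dihedral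
group `D_{2n}` consists of `-1` with multiplicity `2n - 3` together with the three roots
of `x³ + (3-2n)x² + (n²-5n+3)x + 2n² - 4n + 1 = 0`. -/
theorem spectrum_CSCom_dihedral_odd (n : ℕ) [NeZero n] (hn : 3 ≤ n) (hodd : Odd n) :
    (cscomAdj (DihedralGroup n)).charpoly.roots =
      Multiset.replicate (2 * n - 3) (-1) +
        (X ^ 3 + C (3 - 2 * (n : ℂ)) * X ^ 2 + C ((n : ℂ) ^ 2 - 5 * (n : ℂ) + 3) * X
          + C (2 * (n : ℂ) ^ 2 - 4 * (n : ℂ) + 1)).roots := by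
  set q : ℂ[X] := X ^ 3 + C (3 - 2 * (n : ℂ)) * X ^ 2 + C ((n : ℂ) ^ 2 - 5 * (n : ℂ) + 3) * X
      + C (2 * (n : ℂ) ^ 2 - 4 * (n : ℂ) + 1) with hqdef
  have hqne : q ≠ 0 := by
    intro h
    have := congrArg (fun p => Polynomial.coeff p 3) h
    simp only [hqdef, coeff_add, coeff_C_mul, coeff_X_pow, coeff_C, coeff_X, coeff_zero] at this
    norm_num at this
  have hX1 : (X + 1 : ℂ[X]) ≠ 0 := by
    intro h
    have := congrArg (fun p => Polynomial.coeff p 1) h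
    simp only [coeff_add, coeff_X_one, coeff_one, coeff_zero] at this
    norm_num at this
  have hfac : (cscomAdj (DihedralGroup n)).charpoly = (X + 1) ^ (2 * n - 3) * q := by
    apply Polynomial.eq_of_infinite_eval_eq
    apply Set.Infinite.mono (s := ({-1}ᶜ : Set ℂ))
    · intro x hx
      have hx1 : x + 1 ≠ 0 := by
        intro h
        exact hx (by simpa using eq_neg_of_add_eq_zero_left h)
      show _ = _
      rw [key3 hn hodd hx1]
      simp [hqdef]
    · exact (Set.finite_singleton (-1 : ℂ)).infinite_compl
  rw [hfac, Polynomial.roots_mul (mul_ne_zero (pow_ne_zero _ hX1) hqne),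
    Polynomial.roots_pow]
  have : (X + 1 : ℂ[X]) = X - C (-1) := by rw [Polynomial.C_neg, Polynomial.C_1, sub_neg_eq_add]
  rw [this, Polynomial.roots_X_sub_C, Multiset.nsmul_singleton]
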